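/- For every real polynomial p of degree at most 11, every x₀ ∈ ℝ and every h > 0, p''(x₀) = (1065/(1798h²))·(p(x₀−h) + p(x₀+h)) + (519/(1798h²))·(p(x₀−2h) + p(x₀+2h)) + (79/(16182h²))·(p(x₀−3h) + p(x₀+3h)) − (14335/(8091h²))·p(x₀) − (334/899)·(p''(x₀−h) + p''(x₀+h)) − (43/1798)·(p''(x₀−2h) + p''(x₀+2h)). -/

import Mathlib

/-!
The defect of the scheme (left side minus right side) is a linear functional on `ℝ[X]`, so it
vanishes on all polynomials of degree at most 11 as soon as it vanishes on the shifted monomials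
`(X - x₀) ^ n`, `n ≤ 11`. On these `x₀` drops out, and each case is an identity between rational
functions of `h`: these twelve moment conditions are exactly what determines the coefficients.
-/

open Polynomial

namespace Polynomial

variable {R M : Type*} [AddCommMonoid M]

theorem linearMap_eq_zero_of_forall_X_pow [Semiring R] [Module R M] (L : R[X] →ₗ[R] M) {d : ℕ}
    (hL : ∀ n ≤ d, L (X ^ n) = 0) {p : R[X]} (hp : p.degree ≤ d) : L p = 0 := by
  classical
  have hker : degreeLE R d ≤ LinearMap.ker L := by
    rw [degreeLE_eq_span_X_pow, Submodule.span_le, Finset.coe_image, Set.image_subset_iff]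
    intro n hn
    exact hL n (Nat.lt_succ_iff.mp (Finset.mem_range.mp hn))
  exact hker (mem_degreeLE.mpr hp)

theorem linearMap_eq_zero_of_forall_X_sub_C_pow [CommRing R] [Module R M] (L : R[X] →ₗ[R] M)
    {d : ℕ} (a : R) (hL : ∀ n ≤ d, L ((X - C a) ^ n) = 0) {p : R[X]} (hp : p.degree ≤ d) :
    L p = 0 := by
  have hshift : (L ∘ₗ taylor (-a)) (taylor a p) = L p := by
    rw [LinearMap.comp_apply, taylor_taylor, neg_add_cancel, taylor_zero]
  rw [← hshift]
  refine linearMap_eq_zero_of_forall_X_pow _ (fun n hn => ?_) (by rwa [degree_taylor])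
  simpa [sub_eq_add_neg] using hL n hn

end Polynomial

noncomputable def compactFD10Residual (x₀ h : ℝ) : ℝ[X] →ₗ[ℝ] ℝ where
  toFun p := p.derivative.derivative.eval x₀ -
    (1065 / (1798 * h ^ 2) * (p.eval (x₀ - h) + p.eval (x₀ + h)) +
      519 / (1798 * h ^ 2) * (p.eval (x₀ - 2 * h) + p.eval (x₀ + 2 * h)) +
      79 / (16182 * h ^ 2) * (p.eval (x₀ - 3 * h) + p.eval (x₀ + 3 * h)) -
      14335 / (8091 * h ^ 2) * p.eval x₀ -
      334 / 899 * (p.derivative.derivative.eval (x₀ - h) +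
        p.derivative.derivative.eval (x₀ + h)) -
      43 / 1798 * (p.derivative.derivative.eval (x₀ - 2 * h) +
        p.derivative.derivative.eval (x₀ + 2 * h)))
  map_add' p q := by simp only [derivative_add, eval_add]; ring
  map_smul' c p := by simp only [derivative_smul, eval_smul, smul_eq_mul, RingHom.id_apply]; ring

theorem compactFD10Residual_X_sub_C_pow (x₀ : ℝ) {h : ℝ} (hh : h ≠ 0) {n : ℕ} (hn : n ≤ 11) :
    compactFD10Residual x₀ h ((X - C x₀) ^ n) = 0 := by
  simp only [compactFD10Residual, LinearMap.coe_mk, AddHom.coe_mk, derivative_X_sub_C_pow,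
    derivative_mul, derivative_C, zero_mul, zero_add, eval_mul, eval_C, eval_pow, eval_sub, eval_X,
    sub_self, add_sub_cancel_left, sub_sub_cancel_left]
  interval_cases n <;> field_simp <;> ring

/-- The tenth-order compact FD scheme for the second derivative is exact on
polynomials of degree at most 11. -/
theorem compact_fd10_second_deriv_exact_on_polynomials (p : Polynomial ℝ)
    (hp : p.degree ≤ 11) (x₀ h : ℝ) (hh : 0 < h) :
    p.derivative.derivative.eval x₀ =
      1065 / (1798 * h ^ 2) * (p.eval (x₀ - h) + p.eval (x₀ + h)) +
      519 / (1798 * h ^ 2) * (p.eval (x₀ - 2 * h) + p.eval (x₀ + 2 * h)) +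
      79 / (16182 * h ^ 2) * (p.eval (x₀ - 3 * h) + p.eval (x₀ + 3 * h)) -
      14335 / (8091 * h ^ 2) * p.eval x₀ -
      334 / 899 * (p.derivative.derivative.eval (x₀ - h) +
        p.derivative.derivative.eval (x₀ + h)) -
      43 / 1798 * (p.derivative.derivative.eval (x₀ - 2 * h) +
        p.derivative.derivative.eval (x₀ + 2 * h)) :=
  sub_eq_zero.mp <| linearMap_eq_zero_of_forall_X_sub_C_pow (compactFD10Residual x₀ h) x₀
    (fun _ hn => compactFD10Residual_X_sub_C_pow x₀ hh.ne' hn) hp
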